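/- arXiv:2512.21242 — 3 statements merged into one kernel-verified Lean document; each statement's English description precedes it below -/
import Mathlib

section
/- Let G be a finite group with subgroups H ≤ A ⊴ G (A normal in G), and let r be an integer with 0 ≤ r ≤ |N_A(H)/H| − 1 and gcd(2, |N_A(H)/H| − 1) dividing r. If A is an (r,1)-regular set of the pair (G,H), then G = N_G(H)A and N_A(H)/H is an (r,1)-regular set of the group N_G(H)/H. -/
open scoped Pointwise

/-- A subset `C` of the vertices of a graph `Γ` is an `(r,s)`-regular set if every vertex
in `C` has exactly `r` neighbours in `C` and every vertex outside `C` has exactly `s`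
neighbours in `C`. -/
def IsRegularVertexSet {V : Type*} (Γ : SimpleGraph V) (C : Set V) (r s : ℕ) : Prop :=
  (∀ v ∈ C, {w | w ∈ C ∧ Γ.Adj v w}.ncard = r) ∧
  ∀ v ∉ C, {w | w ∈ C ∧ Γ.Adj v w}.ncard = s

/-- The coset graph `Cos(G,H,U)` on the left cosets of `H` in `G`:
`g₁H` and `g₂H` are adjacent iff `g₁⁻¹ g₂ ∈ U`. -/
def cosetGraph {G : Type*} [Group G] (H : Subgroup G) (U : Set G) : SimpleGraph (G ⧸ H) :=
  SimpleGraph.fromRel fun C D =>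
    ∃ g₁ g₂ : G, QuotientGroup.mk g₁ = C ∧ QuotientGroup.mk g₂ = D ∧ g₁⁻¹ * g₂ ∈ U

/-- `U` is a valid connection set for a coset graph `Cos(G,H,U)`:
inverse-closed, disjoint from `H`, and a union of double cosets of `H` (`HUH = U`). -/
def IsCosetGraphConnectionSet {G : Type*} [Group G] (H : Subgroup G) (U : Set G) : Prop :=
  U⁻¹ = U ∧ (H : Set G) ∩ U = ∅ ∧ (H : Set G) * U * (H : Set G) = U

/-- `A` is an `(r,s)`-regular set of the pair `(G,H)`: there is a coset graph
`Cos(G,H,U)` in which the set of left cosets of `H` in `A` is an `(r,s)`-regular set. -/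
def IsRegularSetOfPair {G : Type*} [Group G] (H A : Subgroup G) (r s : ℕ) : Prop :=
  ∃ U : Set G, IsCosetGraphConnectionSet H U ∧
    IsRegularVertexSet (cosetGraph H U)
      {C : G ⧸ H | ∃ a ∈ A, QuotientGroup.mk a = C} r s

/-- `A` is a perfect code of the pair `(G,H)` iff it is a `(0,1)`-regular set of `(G,H)`. -/
def IsPerfectCodeOfPair {G : Type*} [Group G] (H A : Subgroup G) : Prop :=
  IsRegularSetOfPair H A 0 1

/-- A subgroup `A` is an `(r,s)`-regular set of `G` iff it is an `(r,s)`-regular set of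
the pair `(G,1)`, i.e. an `(r,s)`-regular set in some Cayley graph of `G`. -/
def IsRegularSetOfGroup {G : Type*} [Group G] (A : Subgroup G) (r s : ℕ) : Prop :=
  IsRegularSetOfPair ⊥ A r s

/-- A subgroup `A` is a perfect code of `G` iff it is a `(0,1)`-regular set of `G`. -/
def IsPerfectCodeOfGroup {G : Type*} [Group G] (A : Subgroup G) : Prop :=
  IsRegularSetOfGroup A 0 1

/-- The conjugate subgroup `K^t = t⁻¹ K t`. -/
def conjSub {G : Type*} [Group G] (K : Subgroup G) (t : G) : Subgroup G :=
  K.map (MulAut.conj t⁻¹).toMonoidHom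

/-- The subgroup `N_A(H)/H` of the quotient group `N_G(H)/H`, where
`N_A(H) = N_G(H) ∩ A`. -/
def NAHmodH {G : Type*} [Group G] (H A : Subgroup G) :
    Subgroup ((Subgroup.normalizer (H : Set G)) ⧸ H.subgroupOf (Subgroup.normalizer (H : Set G))) :=
  Subgroup.map (QuotientGroup.mk' (H.subgroupOf (Subgroup.normalizer (H : Set G)))) (A.subgroupOf (Subgroup.normalizer (H : Set G)))

/-! For `g ∉ A` the vertex `gH` has exactly one neighbour in `A/H`, so the `u ∈ U` with `gu ∈ A`
form a single coset `uH`. For `h ∈ H` also `hu ∈ U` and `g(hu) = (ghg⁻¹)(gu) ∈ A`, hence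
`u⁻¹hu ∈ H`: thus `u ∈ N_G(H)` and `g = u⁻¹ · u(gu)u⁻¹ ∈ N_G(H)A`. In `N_G(H)/H` the classes of
`U ∩ N_G(H)` outside `A`, together with an inverse-closed `T ⊆ N_A(H)/H ∖ {1}` of size `r`, form a
connection set in which `N_A(H)/H` is `(r,1)`-regular; such a `T` exists because elements pair off
with their inverses, and when `|N_A(H)/H|` is even Cauchy's theorem supplies an involution. -/

theorem Set.inv_sdiff {α : Type*} [Inv α] (s t : Set α) : (s \ t)⁻¹ = s⁻¹ \ t⁻¹ :=
  Set.preimage_sdiff _ _ _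

theorem Set.Finite.exists_subset_inv_eq_self_ncard_eq {α : Type*} [InvolutiveInv α] {Q : Set α}
    (hQ : Q.Finite) (hQinv : Q⁻¹ = Q) {r : ℕ} (hr : r ≤ Q.ncard) (hpar : Even (Q.ncard - r)) :
    ∃ T ⊆ Q, T⁻¹ = T ∧ T.ncard = r := by
  induction hn : Q.ncard using Nat.strong_induction_on generalizing Q r with
  | _ n ih =>
  subst hn
  rcases Nat.eq_zero_or_pos r with rfl | hr0
  · exact ⟨∅, Set.empty_subset Q, Set.inv_empty, Set.ncard_empty α⟩
  rcases eq_or_lt_of_le hr with rfl | hlt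
  · exact ⟨Q, subset_rfl, hQinv, rfl⟩
  obtain ⟨x, hx⟩ := Set.nonempty_of_ncard_ne_zero (by omega : Q.ncard ≠ 0)
  rw [Nat.even_iff] at hpar
  by_cases hxx : x⁻¹ = x
  · have hcard : (Q \ {x}).ncard + 1 = Q.ncard := Set.ncard_sdiff_singleton_add_one hx hQ
    obtain ⟨T, hTQ, hTinv, hTcard⟩ := ih _ (by omega) (Q := Q \ {x}) hQ.sdiff
      (by rw [Set.inv_sdiff, hQinv, Set.inv_singleton, hxx]) (r := r - 1) (by omega)
      (Nat.even_iff.mpr (by omega)) rfl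
    have hxT : x ∉ T := fun h => (hTQ h).2 rfl
    refine ⟨insert x T, Set.insert_subset hx (hTQ.trans Set.sdiff_subset), ?_, ?_⟩
    · rw [Set.inv_insert, hxx, hTinv]
    · rw [Set.ncard_insert_of_notMem hxT (hQ.subset (hTQ.trans Set.sdiff_subset)), hTcard]
      omega
  · have hpair : ({x, x⁻¹} : Set α) ⊆ Q :=
      Set.insert_subset hx (Set.singleton_subset_iff.mpr (hQinv ▸ Set.inv_mem_inv.mpr hx))
    have hcard : (Q \ {x, x⁻¹}).ncard + 2 = Q.ncard := by
      rw [← Set.ncard_pair (Ne.symm hxx), Set.ncard_sdiff_add_ncard_of_subset hpair hQ]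
    obtain ⟨T, hTQ, hTinv, hTcard⟩ := ih _ (by omega) (Q := Q \ {x, x⁻¹}) hQ.sdiff
      (by rw [Set.inv_sdiff, hQinv, Set.inv_insert, Set.inv_singleton, inv_inv, Set.pair_comm])
      (r := r) (by omega) (Nat.even_iff.mpr (by omega)) rfl
    exact ⟨T, hTQ.trans Set.sdiff_subset, hTinv, hTcard⟩

theorem exists_inv_eq_self_one_notMem_ncard_eq {K : Type*} [Group K] [Finite K] {r : ℕ}
    (hr : r ≤ Nat.card K - 1) (hgcd : Nat.gcd 2 (Nat.card K - 1) ∣ r) :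
    ∃ T : Set K, T⁻¹ = T ∧ (1 : K) ∉ T ∧ T.ncard = r := by
  have hpos : 0 < Nat.card K := Nat.card_pos
  have hcompl {S : Set K} (hS : S⁻¹ = S) (hSr : r ≤ Sᶜ.ncard) (hpar : Even (Sᶜ.ncard - r))
      (h1 : (1 : K) ∈ S) : ∃ T : Set K, T⁻¹ = T ∧ (1 : K) ∉ T ∧ T.ncard = r := by
    obtain ⟨T, hTS, hTinv, hTcard⟩ :=
      (Set.toFinite Sᶜ).exists_subset_inv_eq_self_ncard_eq (by rw [Set.compl_inv, hS]) hSr hpar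
    exact ⟨T, hTinv, fun h => hTS h h1, hTcard⟩
  by_cases hpar : Even (Nat.card K - 1 - r)
  · refine hcompl (S := {1}) (by rw [Set.inv_singleton, inv_one]) ?_ ?_ rfl <;>
      rwa [Set.ncard_compl, Set.ncard_singleton]
  · -- `|K|` is even, so Cauchy gives an involution `t`; remove `{1, t}` instead of `{1}`
    have hcard : 2 ∣ Nat.card K := by
      rcases Nat.even_or_odd (Nat.card K - 1) with h | h
      · rw [Nat.gcd_eq_left (even_iff_two_dvd.mp h)] at hgcd
        exact absurd ((Nat.even_sub hr).mpr (iff_of_true h (even_iff_two_dvd.mpr hgcd))) hpar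
      · obtain ⟨k, hk⟩ := h
        exact ⟨k + 1, by omega⟩
    have : Fact (Nat.Prime 2) := ⟨Nat.prime_two⟩
    obtain ⟨t, ht⟩ := exists_prime_orderOf_dvd_card' 2 hcard
    have ht1 : t ≠ 1 := by rintro rfl; simp at ht
    have htinv : t⁻¹ = t := inv_eq_of_mul_eq_one_right (by rw [← sq, ← ht, pow_orderOf_eq_one])
    have hS : ({1, t} : Set K)ᶜ.ncard = Nat.card K - 2 := by
      rw [Set.ncard_compl, Set.ncard_pair (Ne.symm ht1)]
    rw [Nat.even_iff] at hpar
    refine hcompl (S := {1, t}) (by rw [Set.inv_insert, inv_one, Set.inv_singleton, htinv])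
      (by omega) (Nat.even_iff.mpr (by omega)) (Set.mem_insert 1 _)

namespace IsCosetGraphConnectionSet

variable {G : Type*} [Group G] {H : Subgroup G} {U : Set G}

theorem inv_mem (hU : IsCosetGraphConnectionSet H U) {u : G} (hu : u ∈ U) : u⁻¹ ∈ U := by
  rwa [← hU.1, Set.inv_mem_inv]

theorem mul_mem_mul (hU : IsCosetGraphConnectionSet H U) {h₁ u h₂ : G} (h₁H : h₁ ∈ H)
    (hu : u ∈ U) (h₂H : h₂ ∈ H) : h₁ * u * h₂ ∈ U :=
  hU.2.2 ▸ Set.mul_mem_mul (Set.mul_mem_mul h₁H hu) h₂H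

theorem inv_mul_mem_of_mk_eq (hU : IsCosetGraphConnectionSet H U) {a b g₁ g₂ : G}
    (ha : (a : G ⧸ H) = g₁) (hb : (b : G ⧸ H) = g₂) (hab : a⁻¹ * b ∈ U) : g₁⁻¹ * g₂ ∈ U := by
  have h₁ := H.inv_mem (QuotientGroup.eq.mp ha)
  have h₂ := QuotientGroup.eq.mp hb
  convert hU.mul_mem_mul h₁ hab h₂ using 1
  group

theorem cosetGraph_adj_mk (hU : IsCosetGraphConnectionSet H U) (g₁ g₂ : G) :
    (cosetGraph H U).Adj g₁ g₂ ↔ g₁⁻¹ * g₂ ∈ U := by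
  rw [cosetGraph, SimpleGraph.fromRel_adj]
  constructor
  · rintro ⟨-, ⟨a, b, ha, hb, hab⟩ | ⟨a, b, ha, hb, hab⟩⟩
    · exact hU.inv_mul_mem_of_mk_eq ha hb hab
    · simpa using hU.inv_mem (hU.inv_mul_mem_of_mk_eq ha hb hab)
  · intro h
    refine ⟨fun heq => ?_, Or.inl ⟨g₁, g₂, rfl, rfl, h⟩⟩
    exact Set.notMem_empty _ (hU.2.1.subset ⟨QuotientGroup.eq.mp heq, h⟩)

theorem neighbors_in_cosets_eq_image (hU : IsCosetGraphConnectionSet H U) (A : Subgroup G)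
    (g : G) :
    {w | w ∈ {C : G ⧸ H | ∃ a ∈ A, (a : G ⧸ H) = C} ∧ (cosetGraph H U).Adj g w} =
      (fun u => ((g * u : G) : G ⧸ H)) '' {u | u ∈ U ∧ g * u ∈ A} := by
  ext w
  constructor
  · rintro ⟨⟨a, ha, rfl⟩, hadj⟩
    exact ⟨g⁻¹ * a, ⟨(hU.cosetGraph_adj_mk g a).mp hadj, by simpa using ha⟩, by simp⟩
  · rintro ⟨u, ⟨hu, hgu⟩, rfl⟩
    exact ⟨⟨g * u, hgu, rfl⟩, (hU.cosetGraph_adj_mk g _).mpr (by simpa using hu)⟩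

end IsCosetGraphConnectionSet

theorem isRegularSetOfGroup_of_connectionSet {K : Type*} [Group K] {B : Subgroup K} {S : Set K}
    {r s : ℕ} (hSinv : S⁻¹ = S) (hS1 : (1 : K) ∉ S) (hin : (S ∩ B).ncard = r)
    (hout : ∀ x ∉ B, {y | y ∈ S ∧ x * y ∈ B}.ncard = s) : IsRegularSetOfGroup B r s := by
  have hS : IsCosetGraphConnectionSet ⊥ S :=
    ⟨hSinv, by simpa [Set.eq_empty_iff_forall_notMem] using hS1, by simp⟩
  have hcard (x : K) : {w | w ∈ {C : K ⧸ (⊥ : Subgroup K) | ∃ b ∈ B, (b : K ⧸ ⊥) = C} ∧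
      (cosetGraph ⊥ S).Adj x w}.ncard = {y | y ∈ S ∧ x * y ∈ B}.ncard := by
    rw [hS.neighbors_in_cosets_eq_image]
    refine Set.ncard_image_of_injective _ fun y z h => mul_left_cancel (a := x) ?_
    simpa [QuotientGroup.eq, inv_mul_eq_one] using h
  refine ⟨S, hS, ?_, ?_⟩
  · rintro _ ⟨x, hx, rfl⟩
    rw [hcard, ← hin]
    congr 1
    ext y
    simp [B.mul_mem_cancel_left hx]
  · intro v hv
    obtain ⟨x, rfl⟩ := QuotientGroup.mk_surjective v
    exact (hcard x).trans (hout x fun hx => hv ⟨x, hx, rfl⟩)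

section Pair

variable {G : Type*} [Group G] {H A : Subgroup G} {U : Set G}

theorem exists_inv_mul_mem_of_ncard_image_eq_one {g : G}
    (h : ((fun u => ((g * u : G) : G ⧸ H)) '' {u | u ∈ U ∧ g * u ∈ A}).ncard = 1) :
    ∃ u ∈ U, g * u ∈ A ∧ ∀ u' ∈ U, g * u' ∈ A → u⁻¹ * u' ∈ H := by
  obtain ⟨c, hc⟩ := Set.ncard_eq_one.mp h
  obtain ⟨u, ⟨hu, hgu⟩, huc⟩ : c ∈ _ := hc ▸ Set.mem_singleton c
  refine ⟨u, hu, hgu, fun u' hu' hgu' => ?_⟩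
  have hu'c : ((g * u' : G) : G ⧸ H) ∈ ({c} : Set (G ⧸ H)) :=
    hc ▸ Set.mem_image_of_mem _ ⟨hu', hgu'⟩
  simpa [mul_assoc] using QuotientGroup.eq.mp (huc.trans (Set.mem_singleton_iff.mp hu'c).symm)

theorem mem_normalizer_of_inv_mul_mem [Finite G] (hU : IsCosetGraphConnectionSet H U)
    (hHA : H ≤ A) (hA : A.Normal) {g u : G} (hu : u ∈ U) (hgu : g * u ∈ A)
    (huniq : ∀ u' ∈ U, g * u' ∈ A → u⁻¹ * u' ∈ H) : u ∈ Subgroup.normalizer (H : Set G) := by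
  refine inv_mem_iff.mp (Subgroup.mem_normalizer_fintype fun h hh => ?_)
  have hghu : g * (h * u) ∈ A := by
    simpa [mul_assoc] using A.mul_mem (hA.conj_mem h (hHA hh) g) hgu
  simpa [mul_assoc] using huniq _ (by simpa using hU.mul_mem_mul hh hu H.one_mem) hghu

theorem exists_mem_normalizer_of_isRegularVertexSet [Finite G]
    (hU : IsCosetGraphConnectionSet H U) (hHA : H ≤ A) (hA : A.Normal) {r : ℕ}
    (hreg : IsRegularVertexSet (cosetGraph H U) {C : G ⧸ H | ∃ a ∈ A, (a : G ⧸ H) = C} r 1)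
    {g : G} (hg : g ∉ A) :
    ∃ u ∈ U, u ∈ Subgroup.normalizer (H : Set G) ∧ g * u ∈ A ∧
      ∀ u' ∈ U, g * u' ∈ A → u⁻¹ * u' ∈ H := by
  have hgC : (g : G ⧸ H) ∉ {C : G ⧸ H | ∃ a ∈ A, (a : G ⧸ H) = C} := by
    rintro ⟨a, ha, hag⟩
    exact hg (by simpa using A.mul_mem ha (hHA (QuotientGroup.eq.mp hag)))
  have h := hreg.2 _ hgC
  rw [hU.neighbors_in_cosets_eq_image] at h
  obtain ⟨u, hu, hgu, huniq⟩ := exists_inv_mul_mem_of_ncard_image_eq_one h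
  exact ⟨u, hu, mem_normalizer_of_inv_mul_mem hU hHA hA hu hgu huniq, hgu, huniq⟩

theorem normalizer_mul_eq_univ [Finite G] (hU : IsCosetGraphConnectionSet H U) (hHA : H ≤ A)
    (hA : A.Normal) {r : ℕ}
    (hreg : IsRegularVertexSet (cosetGraph H U) {C : G ⧸ H | ∃ a ∈ A, (a : G ⧸ H) = C} r 1) :
    (Subgroup.normalizer (H : Set G) : Set G) * (A : Set G) = Set.univ := by
  refine Set.eq_univ_of_forall fun g => ?_
  by_cases hg : g ∈ A
  · exact ⟨1, Subgroup.one_mem _, g, hg, one_mul g⟩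
  obtain ⟨u, -, hun, hgu, -⟩ := exists_mem_normalizer_of_isRegularVertexSet hU hHA hA hreg hg
  exact ⟨u⁻¹, inv_mem hun, u * (g * u) * u⁻¹, hA.conj_mem _ hgu u, by group⟩

theorem mk_mem_NAHmodH_iff (hHA : H ≤ A) (z : Subgroup.normalizer (H : Set G)) :
    (z : Subgroup.normalizer (H : Set G) ⧸ H.subgroupOf (Subgroup.normalizer (H : Set G))) ∈
      NAHmodH H A ↔ (z : G) ∈ A := by
  refine ⟨fun hz => ?_, fun hz => ⟨z, hz, rfl⟩⟩
  obtain ⟨y, hy, hyz⟩ := Subgroup.mem_map.mp hz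
  have hyz' := QuotientGroup.eq.mp hyz
  rw [Subgroup.mem_subgroupOf] at hy hyz'
  simpa using A.mul_mem hy (hHA hyz')

theorem isRegularSetOfGroup_NAHmodH [Finite G] (hU : IsCosetGraphConnectionSet H U)
    (hHA : H ≤ A) (hA : A.Normal) {r : ℕ}
    (hreg : IsRegularVertexSet (cosetGraph H U) {C : G ⧸ H | ∃ a ∈ A, (a : G ⧸ H) = C} r 1)
    (hr : r ≤ Nat.card (NAHmodH H A) - 1) (hgcd : Nat.gcd 2 (Nat.card (NAHmodH H A) - 1) ∣ r) :
    IsRegularSetOfGroup (NAHmodH H A) r 1 := by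
  set D := NAHmodH H A
  obtain ⟨T, hTinv, hT1, hTcard⟩ := exists_inv_eq_self_one_notMem_ncard_eq hr hgcd
  let π := QuotientGroup.mk' (H.subgroupOf (Subgroup.normalizer (H : Set G)))
  set W : Set (Subgroup.normalizer (H : Set G)) := {w | (w : G) ∈ U ∧ (w : G) ∉ A}
  have hWinv : W⁻¹ = W := by
    ext w
    simp [W, ← Set.mem_inv (a := (w : G)), hU.1]
  have hWD : ∀ w ∈ W, π w ∉ D := fun w hw hwD => hw.2 ((mk_mem_NAHmodH_iff hHA w).mp hwD)
  refine isRegularSetOfGroup_of_connectionSet (S := π '' W ∪ D.subtype '' T) ?_ ?_ ?_ ?_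
  · rw [Set.union_inv, ← Set.image_inv, ← Set.image_inv, hWinv, hTinv]
  · rintro (⟨w, hw, hw1⟩ | ⟨t, ht, ht1⟩)
    · exact hWD w hw (hw1 ▸ D.one_mem)
    · exact hT1 (D.subtype_injective (ht1.trans (map_one _).symm) ▸ ht)
  · have hSD : (π '' W ∪ D.subtype '' T) ∩ D = D.subtype '' T := by
      ext y
      constructor
      · rintro ⟨⟨w, hw, rfl⟩ | hy, hyD⟩
        exacts [absurd hyD (hWD w hw), hy]
      · rintro ⟨t, ht, rfl⟩
        exact ⟨Or.inr ⟨t, ht, rfl⟩, t.2⟩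
    rw [hSD, Set.ncard_image_of_injective _ D.subtype_injective, hTcard]
  · intro x hx
    obtain ⟨z, rfl⟩ := QuotientGroup.mk_surjective x
    have hz : (z : G) ∉ A := fun h => hx ((mk_mem_NAHmodH_iff hHA z).mpr h)
    obtain ⟨u, hu, hun, hzu, huniq⟩ := exists_mem_normalizer_of_isRegularVertexSet hU hHA hA hreg hz
    refine Set.ncard_eq_one.mpr ⟨π ⟨u, hun⟩, Set.eq_singleton_iff_unique_mem.mpr ⟨?_, ?_⟩⟩
    · have huA : u ∉ A := fun huA => hz ((A.mul_mem_cancel_right huA).mp hzu)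
      have hzuD := (mk_mem_NAHmodH_iff hHA (z * ⟨u, hun⟩)).mpr hzu
      exact ⟨Or.inl ⟨⟨u, hun⟩, ⟨hu, huA⟩, rfl⟩, hzuD⟩
    · rintro y ⟨⟨w, hw, rfl⟩ | ⟨t, -, rfl⟩, hy⟩
      · have hzw : (z : G) * w ∈ A := (mk_mem_NAHmodH_iff hHA (z * w)).mp hy
        refine (QuotientGroup.eq.mpr ?_).symm
        simpa [Subgroup.mem_subgroupOf] using huniq w hw.1 hzw
      · exact absurd ((D.mul_mem_cancel_right t.2).mp hy) hx

end Pair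

/-- **Theorem C (converse direction for `s = 1`).** Let `H ≤ A ⊴ G` and let `r` satisfy
`0 ≤ r ≤ |N_A(H)/H| − 1` with `gcd(2, |N_A(H)/H| − 1)` dividing `r`. If `A` is an
`(r,1)`-regular set of `(G,H)`, then `G = N_G(H)A` and `N_A(H)/H` is an `(r,1)`-regular
set of `N_G(H)/H`. -/
theorem theoremC_converse {G : Type*} [Group G] [Fintype G] (H A : Subgroup G)
    (hHA : H ≤ A) (hAnG : A.Normal) (r : ℕ)
    (hr : r ≤ Nat.card ↥(NAHmodH H A) - 1)
    (hgcd : Nat.gcd 2 (Nat.card ↥(NAHmodH H A) - 1) ∣ r)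
    (hreg : IsRegularSetOfPair H A r 1) :
    ((Subgroup.normalizer (H : Set G)) : Set G) * (A : Set G) = Set.univ ∧
      IsRegularSetOfGroup (NAHmodH H A) r 1 := by
  obtain ⟨U, hU, hregU⟩ := hreg
  exact ⟨normalizer_mul_eq_univ hU hHA hAnG hregU,
    isRegularSetOfGroup_NAHmodH hU hHA hAnG hregU hr hgcd⟩
end

section
/- Let G be a finite group with subgroups H ≤ A ⊴ G (A normal in G). Then A is a perfect code of the pair (G,H) if and only if G = N_G(H)A and N_A(H)/H is a perfect code of the group N_G(H)/H. -/
open scoped Pointwise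

/-!
Let `U` be a connection set in which `A/H` is a perfect code of `Cos(G,H,U)`. For `u ∈ U`, the
vertex `u⁻¹H` has the code vertex `H` as its unique neighbour in `A/H`; but since `hu ∈ U` for
`h ∈ H` and `A` is normal, `(u⁻¹hu)H` is also such a neighbour, so `u⁻¹Hu ⊆ H`. Hence
`U ⊆ N := N_G(H)`, every coset of `A` meets `N`, i.e. `G = NA`, and the configuration restricts to
`N`. Conversely, if `G = NA`, a connection set inside `N` that works for `(N, H)` also works for
`(G, H)`: the unique-neighbour condition at `g` is invariant under left multiplication by `A`.
Finally, `H` is normal in `N`, and connection sets of `(N, H)` are exactly the preimages of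
connection sets of `N/H`.
-/

section

variable {G : Type*} [Group G] {H A K : Subgroup G} {U : Set G}

lemma isRegularVertexSet_zero_one_iff {V : Type*} [Finite V] (Γ : SimpleGraph V) (C : Set V) :
    IsRegularVertexSet Γ C 0 1 ↔
      (∀ v ∈ C, ∀ w ∈ C, ¬Γ.Adj v w) ∧ ∀ v ∉ C, ∃! w, w ∈ C ∧ Γ.Adj v w := by
  refine and_congr (forall₂_congr fun v _ => ?_) (forall₂_congr fun v _ => ?_)
  · rw [Set.ncard_eq_zero, Set.eq_empty_iff_forall_notMem]
    simp
  · rw [Set.ncard_eq_one]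
    simp only [Set.eq_singleton_iff_unique_mem, Set.mem_ofPred_eq]
    rfl

lemma isCosetGraphConnectionSet_iff :
    IsCosetGraphConnectionSet H U ↔ (∀ u ∈ U, u⁻¹ ∈ U) ∧ (∀ h ∈ H, h ∉ U) ∧
      ∀ h ∈ H, ∀ u ∈ U, ∀ h' ∈ H, h * u * h' ∈ U := by
  refine and_congr ⟨fun hU u hu => hU ▸ Set.inv_mem_inv.2 hu, fun hU => ?_⟩
    (and_congr ?_ ⟨fun hU h hh u hu h' hh' => ?_, fun hU => ?_⟩)
  · have hsub : U ⊆ U⁻¹ := fun u hu => Set.mem_inv.2 (hU u hu)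
    exact (Set.inv_subset.2 hsub).antisymm hsub
  · simp [Set.eq_empty_iff_forall_notMem]
  · exact hU ▸ Set.mul_mem_mul (Set.mul_mem_mul hh hu) hh'
  · refine (Set.Subset.antisymm ?_ fun u hu => ?_)
    · rintro _ ⟨_, ⟨h, hh, u, hu, rfl⟩, h', hh', rfl⟩
      exact hU h hh u hu h' hh'
    · exact ⟨u, ⟨1, H.one_mem, u, hu, one_mul u⟩, 1, H.one_mem, mul_one u⟩

lemma IsCosetGraphConnectionSet.mul_mul_mem (hU : IsCosetGraphConnectionSet H U) {h u h' : G}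
    (hh : h ∈ H) (hu : u ∈ U) (hh' : h' ∈ H) : h * u * h' ∈ U :=
  (isCosetGraphConnectionSet_iff.1 hU).2.2 h hh u hu h' hh'

lemma cosetGraph_adj_mk (hU : IsCosetGraphConnectionSet H U) (g g' : G) :
    (cosetGraph H U).Adj g g' ↔ g⁻¹ * g' ∈ U := by
  obtain ⟨hinv, hdisj, -⟩ := isCosetGraphConnectionSet_iff.1 hU
  have hrel : ∀ x y : G, (∃ g₁ g₂ : G, (g₁ : G ⧸ H) = x ∧ (g₂ : G ⧸ H) = y ∧ g₁⁻¹ * g₂ ∈ U) ↔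
      x⁻¹ * y ∈ U := by
    refine fun x y => ⟨?_, fun h => ⟨x, y, rfl, rfl, h⟩⟩
    rintro ⟨g₁, g₂, hx, hy, hu⟩
    simpa [mul_assoc] using
      hU.mul_mul_mem (H.inv_mem (QuotientGroup.eq.1 hx)) hu (QuotientGroup.eq.1 hy)
  rw [cosetGraph, SimpleGraph.fromRel_adj, hrel, hrel]
  refine ⟨?_, fun h => ⟨fun he => hdisj _ (QuotientGroup.eq.1 he) h, Or.inl h⟩⟩
  rintro ⟨-, h | h⟩
  · exact h
  · simpa using hinv _ h

lemma IsCosetGraphConnectionSet.preimage_image_mk (hU : IsCosetGraphConnectionSet H U) :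
    (↑) ⁻¹' (((↑) : G → G ⧸ H) '' U) = U := by
  refine Set.Subset.antisymm ?_ (Set.subset_preimage_image _ _)
  rintro g ⟨u, hu, hug⟩
  simpa using hU.mul_mul_mem H.one_mem hu (QuotientGroup.eq.1 hug)

/-- In `Cos(G,H,U)` the vertex `gH` has exactly one neighbour `aH` with `a ∈ A`, phrased with
representatives: `a⁻¹ * b ∈ H` says `aH = bH`. -/
def HasUniqueNeighbourIn (H A : Subgroup G) (U : Set G) (g : G) : Prop :=
  ∃ a ∈ A, g⁻¹ * a ∈ U ∧ ∀ b ∈ A, g⁻¹ * b ∈ U → a⁻¹ * b ∈ H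

def IsPerfectCodeConnectionSet (H A : Subgroup G) (U : Set G) : Prop :=
  IsCosetGraphConnectionSet H U ∧ (∀ a ∈ A, a ∉ U) ∧ ∀ g ∉ A, HasUniqueNeighbourIn H A U g

lemma QuotientGroup.existsUnique_iff_exists_inv_mul_mem (P : G ⧸ H → Prop) :
    (∃! c, P c) ↔ ∃ a : G, P a ∧ ∀ b : G, P b → a⁻¹ * b ∈ H := by
  simp only [ExistsUnique, QuotientGroup.mk_surjective.exists, QuotientGroup.mk_surjective.forall]
  refine exists_congr fun a => and_congr_right fun _ => forall_congr' fun b => ?_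
  rw [eq_comm, QuotientGroup.eq]

lemma QuotientGroup.mk_mem_image_iff (hHA : H ≤ A) (g : G) :
    (g : G ⧸ H) ∈ ((↑) : G → G ⧸ H) '' A ↔ g ∈ A := by
  refine ⟨?_, fun hg => ⟨g, hg, rfl⟩⟩
  rintro ⟨a, ha, hag⟩
  simpa using A.mul_mem ha (hHA (QuotientGroup.eq.1 hag))

lemma isPerfectCodeOfPair_iff [Finite G] (hHA : H ≤ A) :
    IsPerfectCodeOfPair H A ↔ ∃ U, IsPerfectCodeConnectionSet H A U := by
  refine exists_congr fun U => and_congr_right fun hU => ?_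
  have hcode : {C : G ⧸ H | ∃ a ∈ A, (a : G ⧸ H) = C} = ((↑) : G → G ⧸ H) '' A := rfl
  rw [hcode, isRegularVertexSet_zero_one_iff]
  simp only [QuotientGroup.existsUnique_iff_exists_inv_mul_mem, QuotientGroup.mk_surjective.forall,
    QuotientGroup.mk_mem_image_iff hHA, cosetGraph_adj_mk hU, HasUniqueNeighbourIn, and_assoc,
    and_imp]
  refine and_congr_left' ⟨fun h a ha => ?_, fun h a ha b hb => h _ (A.mul_mem (A.inv_mem ha) hb)⟩
  simpa using h 1 A.one_mem a ha

lemma IsPerfectCodeConnectionSet.subset_normalizer [Finite G] (hHA : H ≤ A) (hA : A.Normal)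
    (hU : IsPerfectCodeConnectionSet H A U) : U ⊆ Subgroup.normalizer (H : Set G) := by
  obtain ⟨hconn, hAU, hcode⟩ := hU
  intro u hu
  obtain ⟨a, -, -, huniq⟩ := hcode u⁻¹ (fun h => hAU _ (A.inv_mem_iff.1 h) hu)
  simp only [inv_inv] at huniq
  have hconj : ∀ h ∈ H, u⁻¹ * h * u ∈ H := by
    intro h hh
    have h₁ : a⁻¹ * 1 ∈ H := huniq 1 A.one_mem (by simpa using hu)
    have h₂ : a⁻¹ * (u⁻¹ * h * u) ∈ H := by
      refine huniq _ (hA.conj_mem' h (hHA hh) u) ?_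
      simpa [mul_assoc] using hconn.mul_mul_mem hh hu H.one_mem
    simpa using H.mul_mem (H.inv_mem h₁) h₂
  have : u⁻¹ ∈ Subgroup.normalizer (H : Set G) :=
    Subgroup.mem_normalizer_fintype fun h hh => by simpa using hconj h hh
  simpa using inv_mem this

lemma isCosetGraphConnectionSet_subgroupOf_iff (hHK : H ≤ K) {V : Set K} :
    IsCosetGraphConnectionSet (H.subgroupOf K) V ↔
      IsCosetGraphConnectionSet H ((↑) '' V) := by
  simp only [isCosetGraphConnectionSet_iff, Set.forall_mem_image, Subgroup.mem_subgroupOf,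
    Subtype.val_injective.mem_set_image, ← Subgroup.coe_inv]
  refine and_congr_right fun _ => and_congr ?_ ⟨fun hV h hh v hv h' hh' => ?_, ?_⟩
  · exact ⟨fun hV h hh ⟨v, hv, hvh⟩ => hV v (hvh ▸ hh) hv, fun hV h hh hhV => hV _ hh ⟨h, hhV, rfl⟩⟩
  · exact ⟨⟨h, hHK hh⟩ * v * ⟨h', hHK hh'⟩, hV _ hh v hv _ hh', rfl⟩
  · rintro hV h hh v hv h' hh'
    obtain ⟨w, hw, hwv⟩ := hV h hh hv h' hh'
    rwa [← Subtype.ext (hwv.trans (by simp) : (w : G) = ↑(h * v * h'))]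

lemma HasUniqueNeighbourIn.mul_left {g a₀ : G} (ha₀ : a₀ ∈ A)
    (hg : HasUniqueNeighbourIn H A U g) : HasUniqueNeighbourIn H A U (a₀ * g) := by
  obtain ⟨a, ha, hau, huniq⟩ := hg
  refine ⟨a₀ * a, A.mul_mem ha₀ ha, by simpa [mul_assoc] using hau, fun b hb hbu => ?_⟩
  simpa [mul_assoc] using huniq _ (A.mul_mem (A.inv_mem ha₀) hb) (by simpa [mul_assoc] using hbu)

lemma hasUniqueNeighbourIn_subgroupOf_iff {V : Set K} (n : K) :
    HasUniqueNeighbourIn (H.subgroupOf K) (A.subgroupOf K) V n ↔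
      HasUniqueNeighbourIn H A ((↑) '' V) n := by
  constructor
  · rintro ⟨a, ha, hav, huniq⟩
    refine ⟨a, ha, ⟨_, hav, by simp⟩, ?_⟩
    rintro b hb ⟨w, hw, hwb⟩
    obtain rfl : b = ↑(n * w) := by simp [hwb]
    simpa [Subgroup.mem_subgroupOf] using huniq (n * w) hb (by simpa using hw)
  · rintro ⟨a, ha, ⟨v, hv, hva⟩, huniq⟩
    obtain rfl : a = ↑(n * v) := by simp [hva]
    refine ⟨n * v, ha, by simpa using hv, fun b hb hbv => ?_⟩
    simpa [Subgroup.mem_subgroupOf] using huniq b hb ⟨_, hbv, by simp⟩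

lemma IsPerfectCodeConnectionSet.mul_eq_univ (hU : IsPerfectCodeConnectionSet H A U)
    (hUK : U ⊆ K) : (K : Set G) * (A : Set G) = Set.univ := by
  refine Set.eq_univ_of_forall fun g => ?_
  by_cases hg : g ∈ A
  · exact ⟨1, K.one_mem, g, hg, one_mul g⟩
  · obtain ⟨a, ha, hga, -⟩ := hU.2.2 g⁻¹ (inv_mem_iff.not.2 hg)
    exact ⟨g * a, hUK (by simpa using hga), a⁻¹, A.inv_mem ha, mul_inv_cancel_right g a⟩

lemma isPerfectCodeConnectionSet_subgroupOf_iff (hHK : H ≤ K)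
    (hKA : (K : Set G) * (A : Set G) = Set.univ) {V : Set K} :
    IsPerfectCodeConnectionSet (H.subgroupOf K) (A.subgroupOf K) V ↔
      IsPerfectCodeConnectionSet H A ((↑) '' V) := by
  rw [IsPerfectCodeConnectionSet, IsPerfectCodeConnectionSet,
    isCosetGraphConnectionSet_subgroupOf_iff hHK]
  refine and_congr_right fun _ => and_congr ?_ ⟨fun h g hg => ?_, fun h n hn => ?_⟩
  · refine ⟨fun h a ha ⟨v, hv, hva⟩ => h v (by simpa [Subgroup.mem_subgroupOf, hva]) hv,
      fun h a ha hav => h a ha ⟨a, hav, rfl⟩⟩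
  · obtain ⟨k, hk, a, ha, hka⟩ := hKA.symm ▸ Set.mem_univ g⁻¹
    obtain rfl : g = a⁻¹ * k⁻¹ := by rw [← mul_inv_rev, show k * a = g⁻¹ from hka, inv_inv]
    have hk' : (⟨k, hk⟩ : K)⁻¹ ∉ A.subgroupOf K := fun hkA => hg (A.mul_mem (A.inv_mem ha) hkA)
    exact ((hasUniqueNeighbourIn_subgroupOf_iff _).1 (h _ hk')).mul_left (A.inv_mem ha)
  · exact (hasUniqueNeighbourIn_subgroupOf_iff n).2 (h n hn)

lemma exists_perfectCodeConnectionSet_subset_iff (hHK : H ≤ K) :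
    (∃ U ⊆ (K : Set G), IsPerfectCodeConnectionSet H A U) ↔
      (K : Set G) * (A : Set G) = Set.univ ∧
        ∃ V : Set K, IsPerfectCodeConnectionSet (H.subgroupOf K) (A.subgroupOf K) V := by
  constructor
  · rintro ⟨U, hUK, hU⟩
    have hKA := hU.mul_eq_univ hUK
    refine ⟨hKA, (↑) ⁻¹' U, (isPerfectCodeConnectionSet_subgroupOf_iff hHK hKA).2 ?_⟩
    rwa [Set.image_preimage_eq_of_subset (by simpa using hUK)]
  · rintro ⟨hKA, V, hV⟩
    exact ⟨_, Subtype.coe_image_subset _ _,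
      (isPerfectCodeConnectionSet_subgroupOf_iff hHK hKA).1 hV⟩

section NormalSubgroup

variable [H.Normal]

lemma QuotientGroup.mk_mem_map_mk'_iff (hHA : H ≤ A) (g : G) :
    (g : G ⧸ H) ∈ A.map (QuotientGroup.mk' H) ↔ g ∈ A := by
  change g ∈ (A.map (QuotientGroup.mk' H)).comap (QuotientGroup.mk' H) ↔ g ∈ A
  rw [QuotientGroup.comap_map_mk', sup_eq_right.2 hHA]

lemma isPerfectCodeConnectionSet_preimage_mk_iff (hHA : H ≤ A) (S : Set (G ⧸ H)) :
    IsPerfectCodeConnectionSet H A ((↑) ⁻¹' S) ↔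
      IsPerfectCodeConnectionSet ⊥ (A.map (QuotientGroup.mk' H)) S := by
  simp only [IsPerfectCodeConnectionSet, isCosetGraphConnectionSet_iff, HasUniqueNeighbourIn,
    QuotientGroup.mk_surjective.forall, QuotientGroup.mk_surjective.exists, Set.mem_preimage,
    ← QuotientGroup.mk_inv, ← QuotientGroup.mk_mul, QuotientGroup.mk_mem_map_mk'_iff hHA,
    Subgroup.mem_bot, QuotientGroup.eq_one_iff]

lemma isPerfectCodeOfPair_iff_isPerfectCodeOfGroup_map [Finite G] (hHA : H ≤ A) :
    IsPerfectCodeOfPair H A ↔ IsPerfectCodeOfGroup (A.map (QuotientGroup.mk' H)) := by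
  rw [isPerfectCodeOfPair_iff hHA, IsPerfectCodeOfGroup, IsRegularSetOfGroup,
    ← IsPerfectCodeOfPair, isPerfectCodeOfPair_iff bot_le]
  refine ⟨fun ⟨U, hU⟩ => ⟨(↑) '' U, ?_⟩,
    fun ⟨S, hS⟩ => ⟨_, (isPerfectCodeConnectionSet_preimage_mk_iff hHA S).2 hS⟩⟩
  rwa [← isPerfectCodeConnectionSet_preimage_mk_iff hHA, hU.1.preimage_image_mk]

end NormalSubgroup

end

/-- **Theorem C (perfect code case).** Let `H ≤ A ⊴ G`. Then `A` is a perfect code of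
`(G,H)` iff `G = N_G(H)A` and `N_A(H)/H` is a perfect code of the group `N_G(H)/H`. -/
theorem theoremC_perfectCode {G : Type*} [Group G] [Fintype G] (H A : Subgroup G)
    (hHA : H ≤ A) (hAnG : A.Normal) :
    IsPerfectCodeOfPair H A ↔
      ((Subgroup.normalizer (H : Set G)) : Set G) * (A : Set G) = Set.univ ∧
        IsPerfectCodeOfGroup (NAHmodH H A) := by
  have hsub : (∃ U, IsPerfectCodeConnectionSet H A U) ↔
      ∃ U ⊆ (Subgroup.normalizer (H : Set G) : Set G), IsPerfectCodeConnectionSet H A U :=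
    ⟨fun ⟨U, hU⟩ => ⟨U, hU.subset_normalizer hHA hAnG, hU⟩, fun ⟨U, _, hU⟩ => ⟨U, hU⟩⟩
  have hHA' := Subgroup.subgroupOf_mono (Subgroup.normalizer (H : Set G)) hHA
  rw [isPerfectCodeOfPair_iff hHA, hsub,
    exists_perfectCodeConnectionSet_subset_iff Subgroup.le_normalizer, NAHmodH,
    ← isPerfectCodeOfPair_iff_isPerfectCodeOfGroup_map hHA', isPerfectCodeOfPair_iff hHA']
end

section
/- Let G be a finite group and H ≤ A ≤ G subgroups, and let r, s be natural numbers. Then A is an (r,s)-regular set of the pair (G,H) if and only if A is both a (0,s)-regular set of (G,H) and an (r,0)-regular set of (G,H). -/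
open scoped Pointwise

def cosetCodeSet {G : Type*} [Group G] (H A : Subgroup G) : Set (G ⧸ H) :=
  {C : G ⧸ H | ∃ a ∈ A, QuotientGroup.mk a = C}



section
variable {G : Type*} [Group G] {H A : Subgroup G} {U V : Set G}

lemma conn_mul_mem (hU : IsCosetGraphConnectionSet H U) {h h' u : G}
    (hh : h ∈ H) (hh' : h' ∈ H) (hu : u ∈ U) : h * u * h' ∈ U := by
  rw [← hU.2.2]; exact Set.mul_mem_mul (Set.mul_mem_mul hh hu) hh'

lemma conn_inv_mem (hU : IsCosetGraphConnectionSet H U) {u : G} (hu : u ∈ U) : u⁻¹ ∈ U := by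
  rw [← hU.1, Set.mem_inv, inv_inv]; exact hu

lemma conn_notMem_H (hU : IsCosetGraphConnectionSet H U) {u : G} (hu : u ∈ U) : u ∉ H :=
  fun hh => Set.eq_empty_iff_forall_notMem.mp hU.2.1 u ⟨hh, hu⟩

end


section
variable {G : Type*} [Group G] {H A : Subgroup G} {U V : Set G}

lemma adj_iff (hU : IsCosetGraphConnectionSet H U) (g₁ g₂ : G) :
    (cosetGraph H U).Adj (g₁ : G ⧸ H) (g₂ : G ⧸ H) ↔ g₁⁻¹ * g₂ ∈ U := by
  rw [cosetGraph, SimpleGraph.fromRel_adj]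
  constructor
  · rintro ⟨hne, ⟨a, b, ha, hb, hab⟩ | ⟨a, b, ha, hb, hab⟩⟩
    · have ha' : a⁻¹ * g₁ ∈ H := QuotientGroup.eq.mp ha
      have hb' : b⁻¹ * g₂ ∈ H := QuotientGroup.eq.mp hb
      have key : (a⁻¹ * g₁)⁻¹ * (a⁻¹ * b) * (b⁻¹ * g₂) ∈ U :=
        conn_mul_mem hU (H.inv_mem ha') hb' hab
      have e : (a⁻¹ * g₁)⁻¹ * (a⁻¹ * b) * (b⁻¹ * g₂) = g₁⁻¹ * g₂ := by group
      rwa [e] at key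
    · have ha' : a⁻¹ * g₂ ∈ H := QuotientGroup.eq.mp ha
      have hb' : b⁻¹ * g₁ ∈ H := QuotientGroup.eq.mp hb
      have key : (a⁻¹ * g₂)⁻¹ * (a⁻¹ * b) * (b⁻¹ * g₁) ∈ U :=
        conn_mul_mem hU (H.inv_mem ha') hb' hab
      have e : (a⁻¹ * g₂)⁻¹ * (a⁻¹ * b) * (b⁻¹ * g₁) = g₂⁻¹ * g₁ := by group
      rw [e] at key
      have := conn_inv_mem hU key
      rwa [mul_inv_rev, inv_inv] at this
  · intro h
    refine ⟨fun heq => ?_, Or.inl ⟨g₁, g₂, rfl, rfl, h⟩⟩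
    exact conn_notMem_H hU h (QuotientGroup.eq.mp heq)

lemma mem_C_iff (hHA : H ≤ A) (x : G) :
    ((x : G ⧸ H) ∈ cosetCodeSet H A) ↔ x ∈ A := by
  constructor
  · rintro ⟨a, ha, h⟩
    have h2 : a⁻¹ * x ∈ H := QuotientGroup.eq.mp h
    have := A.mul_mem ha (hHA h2)
    simpa [mul_assoc] using this
  · intro hx; exact ⟨x, hx, rfl⟩

lemma conn_mem_inv_iff (hU : IsCosetGraphConnectionSet H U) {u : G} : u ∈ U ↔ u⁻¹ ∈ U :=
  ⟨conn_inv_mem hU, fun h => by simpa using conn_inv_mem hU h⟩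

lemma conn_inter (hU : IsCosetGraphConnectionSet H U) (hHA : H ≤ A) :
    IsCosetGraphConnectionSet H (U ∩ A) := by
  refine ⟨?_, ?_, ?_⟩
  · ext x
    simp only [Set.mem_inv, Set.mem_inter_iff, SetLike.mem_coe, inv_mem_iff]
    exact and_congr_left fun _ => (conn_mem_inv_iff hU).symm
  · apply Set.eq_empty_of_subset_empty
    rw [← hU.2.1]
    exact Set.inter_subset_inter_right _ Set.inter_subset_left
  · apply Set.Subset.antisymm
    · rintro x hx
      obtain ⟨y, ⟨h, hh, u, ⟨huU, huA⟩, rfl⟩, h', hh', rfl⟩ := hx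
      exact ⟨conn_mul_mem hU hh hh' huU, A.mul_mem (A.mul_mem (hHA hh) huA) (hHA hh')⟩
    · intro u hu
      have := Set.mul_mem_mul (Set.mul_mem_mul H.one_mem hu) H.one_mem
      simpa using this

lemma conn_diff (hU : IsCosetGraphConnectionSet H U) (hHA : H ≤ A) :
    IsCosetGraphConnectionSet H (U \ (A : Set G)) := by
  refine ⟨?_, ?_, ?_⟩
  · ext x
    simp only [Set.mem_inv, Set.mem_diff, SetLike.mem_coe, inv_mem_iff]
    exact and_congr_left fun _ => (conn_mem_inv_iff hU).symm
  · apply Set.eq_empty_of_subset_empty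
    rw [← hU.2.1]
    exact Set.inter_subset_inter_right _ Set.diff_subset
  · apply Set.Subset.antisymm
    · rintro x hx
      obtain ⟨y, ⟨h, hh, u, ⟨huU, huA⟩, rfl⟩, h', hh', rfl⟩ := hx
      refine ⟨conn_mul_mem hU hh hh' huU, fun hmem => huA ?_⟩
      have : h⁻¹ * (h * u * h') * h'⁻¹ ∈ A :=
        A.mul_mem (A.mul_mem (A.inv_mem (hHA hh)) hmem) (A.inv_mem (hHA hh'))
      simpa [mul_assoc] using this
    · intro u hu
      have := Set.mul_mem_mul (Set.mul_mem_mul H.one_mem hu) H.one_mem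
      simpa using this

lemma conn_union (hU : IsCosetGraphConnectionSet H U) (hV : IsCosetGraphConnectionSet H V) :
    IsCosetGraphConnectionSet H (U ∪ V) := by
  refine ⟨?_, ?_, ?_⟩
  · ext x
    simp only [Set.mem_inv, Set.mem_union]
    rw [← conn_mem_inv_iff hU, ← conn_mem_inv_iff hV]
  · rw [Set.inter_union_distrib_left, hU.2.1, hV.2.1, Set.union_empty]
  · rw [Set.mul_union, Set.union_mul, hU.2.2, hV.2.2]

end


section
variable {G : Type*} [Group G] {H A : Subgroup G} {U U' : Set G}

lemma nbr_set_in (hHA : H ≤ A) (hU : IsCosetGraphConnectionSet H U)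
    (hU' : IsCosetGraphConnectionSet H U') (hUU' : U ∩ A = U' ∩ A) {g : G} (hg : g ∈ A) :
    {w | w ∈ cosetCodeSet H A ∧ (cosetGraph H U).Adj (g : G ⧸ H) w} =
      {w | w ∈ cosetCodeSet H A ∧ (cosetGraph H U').Adj (g : G ⧸ H) w} := by
  ext w
  induction w using QuotientGroup.induction_on with
  | H x =>
    simp only [Set.mem_setOf_eq, mem_C_iff hHA, adj_iff hU, adj_iff hU']
    refine and_congr_right fun hx => ?_
    have hA : g⁻¹ * x ∈ A := A.mul_mem (A.inv_mem hg) hx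
    constructor
    · intro h; exact ((Set.ext_iff.mp hUU' _).mp ⟨h, hA⟩).1
    · intro h; exact ((Set.ext_iff.mp hUU' _).mpr ⟨h, hA⟩).1

lemma nbr_set_out (hHA : H ≤ A) (hU : IsCosetGraphConnectionSet H U)
    (hU' : IsCosetGraphConnectionSet H U') (hUU' : U \ (A : Set G) = U' \ (A : Set G))
    {g : G} (hg : g ∉ A) :
    {w | w ∈ cosetCodeSet H A ∧ (cosetGraph H U).Adj (g : G ⧸ H) w} =
      {w | w ∈ cosetCodeSet H A ∧ (cosetGraph H U').Adj (g : G ⧸ H) w} := by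
  ext w
  induction w using QuotientGroup.induction_on with
  | H x =>
    simp only [Set.mem_setOf_eq, mem_C_iff hHA, adj_iff hU, adj_iff hU']
    refine and_congr_right fun hx => ?_
    have hA : g⁻¹ * x ∉ A := by
      intro hA
      have := A.mul_mem hx (A.inv_mem hA)
      simp only [mul_inv_rev, inv_inv, ← mul_assoc, mul_inv_cancel, one_mul] at this
      exact hg this
    constructor
    · intro h; exact ((Set.ext_iff.mp hUU' _).mp ⟨h, hA⟩).1
    · intro h; exact ((Set.ext_iff.mp hUU' _).mpr ⟨h, hA⟩).1

lemma nbr_set_in_empty (hHA : H ≤ A) (hU : IsCosetGraphConnectionSet H (U ∩ A))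
    {g : G} (hg : g ∉ A) :
    {w | w ∈ cosetCodeSet H A ∧ (cosetGraph H (U ∩ A)).Adj (g : G ⧸ H) w} = ∅ := by
  rw [Set.eq_empty_iff_forall_notMem]
  intro w
  induction w using QuotientGroup.induction_on with
  | H x =>
    simp only [Set.mem_setOf_eq, mem_C_iff hHA, adj_iff hU]
    rintro ⟨hx, -, hA⟩
    apply hg
    have := A.mul_mem hx (A.inv_mem hA)
    simpa only [mul_inv_rev, inv_inv, ← mul_assoc, mul_inv_cancel, one_mul] using this

lemma nbr_set_out_empty (hHA : H ≤ A) (hU : IsCosetGraphConnectionSet H (U \ (A : Set G)))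
    {g : G} (hg : g ∈ A) :
    {w | w ∈ cosetCodeSet H A ∧ (cosetGraph H (U \ (A : Set G))).Adj (g : G ⧸ H) w} = ∅ := by
  rw [Set.eq_empty_iff_forall_notMem]
  intro w
  induction w using QuotientGroup.induction_on with
  | H x =>
    simp only [Set.mem_setOf_eq, mem_C_iff hHA, adj_iff hU]
    rintro ⟨hx, -, hA⟩
    exact hA (A.mul_mem (A.inv_mem hg) hx)

end

/-- **Lemma (key1).** Let `H ≤ A ≤ G`. Then `A` is an `(r,s)`-regular set of `(G,H)` iff
`A` is both a `(0,s)`-regular set and an `(r,0)`-regular set of `(G,H)`. -/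
theorem lemma_key1 {G : Type*} [Group G] [Fintype G] (H A : Subgroup G) (hHA : H ≤ A)
    (r s : ℕ) :
    IsRegularSetOfPair H A r s ↔
      IsRegularSetOfPair H A 0 s ∧ IsRegularSetOfPair H A r 0 := by
  have hCdef : {C : G ⧸ H | ∃ a ∈ A, QuotientGroup.mk a = C} = cosetCodeSet H A := rfl
  constructor
  · rintro ⟨U, hU, hreg⟩
    simp only [IsRegularSetOfPair, IsRegularVertexSet, hCdef] at hreg ⊢
    constructor
    · -- U \ A is (0,s)
      refine ⟨U \ (A : Set G), conn_diff hU hHA, ?_, ?_⟩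
      · intro v hv
        obtain ⟨g, rfl⟩ := QuotientGroup.mk_surjective v
        have hg : g ∈ A := (mem_C_iff hHA g).mp hv
        rw [nbr_set_out_empty hHA (conn_diff hU hHA) hg, Set.ncard_empty]
      · intro v hv
        obtain ⟨g, rfl⟩ := QuotientGroup.mk_surjective v
        have hg : g ∉ A := fun h => hv ((mem_C_iff hHA g).mpr h)
        rw [nbr_set_out hHA (conn_diff hU hHA) hU (by simp [Set.diff_diff]) hg]
        exact hreg.2 _ hv
    · -- U ∩ A is (r,0)
      refine ⟨U ∩ (A : Set G), conn_inter hU hHA, ?_, ?_⟩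
      · intro v hv
        obtain ⟨g, rfl⟩ := QuotientGroup.mk_surjective v
        have hg : g ∈ A := (mem_C_iff hHA g).mp hv
        rw [nbr_set_in hHA (conn_inter hU hHA) hU (by rw [Set.inter_assoc, Set.inter_self]) hg]
        exact hreg.1 _ hv
      · intro v hv
        obtain ⟨g, rfl⟩ := QuotientGroup.mk_surjective v
        have hg : g ∉ A := fun h => hv ((mem_C_iff hHA g).mpr h)
        rw [nbr_set_in_empty hHA (conn_inter hU hHA) hg, Set.ncard_empty]
  · rintro ⟨⟨U₁, hU₁, hreg₁⟩, ⟨U₂, hU₂, hreg₂⟩⟩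
    simp only [IsRegularSetOfPair, IsRegularVertexSet, hCdef] at hreg₁ hreg₂ ⊢
    have hconn : IsCosetGraphConnectionSet H ((U₁ \ (A : Set G)) ∪ (U₂ ∩ A)) :=
      conn_union (conn_diff hU₁ hHA) (conn_inter hU₂ hHA)
    refine ⟨(U₁ \ (A : Set G)) ∪ (U₂ ∩ A), hconn, ?_, ?_⟩
    · intro v hv
      obtain ⟨g, rfl⟩ := QuotientGroup.mk_surjective v
      have hg : g ∈ A := (mem_C_iff hHA g).mp hv
      rw [nbr_set_in hHA hconn hU₂ ?_ hg]
      · exact hreg₂.1 _ hv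
      · rw [Set.union_inter_distrib_right, Set.inter_assoc, Set.inter_self]
        have : (U₁ \ (A : Set G)) ∩ (A : Set G) = ∅ := by
          rw [Set.diff_eq, Set.inter_assoc]; simp
        rw [this, Set.empty_union]
    · intro v hv
      obtain ⟨g, rfl⟩ := QuotientGroup.mk_surjective v
      have hg : g ∉ A := fun h => hv ((mem_C_iff hHA g).mpr h)
      rw [nbr_set_out hHA hconn hU₁ ?_ hg]
      · exact hreg₁.2 _ hv
      · rw [Set.union_diff_distrib, Set.diff_diff, Set.union_self]
        have : (U₂ ∩ (A : Set G)) \ (A : Set G) = ∅ := by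
          rw [Set.diff_eq, Set.inter_assoc]; simp
        rw [this, Set.union_empty]
end
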